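/- Let d ≥ 3. There exists a constant C = C(d) < ∞ such that for every x ∈ Z^d, ∑_{z, z' ∈ Z^d} 1/((|z|+1)^{d−1}(|z−x|+1)^{d−1}) · 1/((|z'|+1)^{d−1}(|z'−x|+1)^{d−1}) · 1/(|z−z'|+1)^d ≤ C/(|x|+1)^{2d−2}. -/

import Mathlib

/-- The Euclidean norm of a point of the lattice `ℤ^d`. -/
noncomputable def latNorm {d : ℕ} (x : Fin d → ℤ) : ℝ :=
  Real.sqrt (∑ i, ((x i : ℝ)) ^ 2)

namespace LatAux

open scoped ENNReal
open ENNReal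

variable {d : ℕ}

noncomputable def emap (w : Fin d → ℤ) : EuclideanSpace ℝ (Fin d) := WithLp.toLp 2 (fun i => (w i : ℝ))

lemma latNorm_eq_norm (w : Fin d → ℤ) : latNorm w = ‖emap w‖ := by
  rw [EuclideanSpace.norm_eq]
  unfold latNorm
  congr 1
  refine Finset.sum_congr rfl fun i _ => ?_
  simp [emap, Real.norm_eq_abs, sq_abs]

lemma emap_sub (z x : Fin d → ℤ) : emap (z - x) = emap z - emap x := by
  ext i
  simp [emap]

lemma latNorm_triangle (x z : Fin d → ℤ) :
    latNorm x ≤ latNorm z + latNorm (z - x) := by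
  rw [latNorm_eq_norm, latNorm_eq_norm, latNorm_eq_norm, emap_sub]
  have h : emap x = emap z - (emap z - emap x) := by abel
  have h2 := norm_sub_le (emap z) (emap z - emap x)
  rw [← h] at h2
  exact h2

noncomputable def N (w : Fin d → ℤ) : ℝ := latNorm w + 1

lemma latNorm_nonneg (w : Fin d → ℤ) : 0 ≤ latNorm w := Real.sqrt_nonneg _

lemma one_le_N (w : Fin d → ℤ) : 1 ≤ N w := by
  have := latNorm_nonneg w; unfold N; linarith

lemma N_pos (w : Fin d → ℤ) : 0 < N w := lt_of_lt_of_le one_pos (one_le_N w)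

lemma N_rpow_pos (w : Fin d → ℤ) (p : ℝ) : 0 < N w ^ p :=
  Real.rpow_pos_of_pos (N_pos w) p

lemma Vr_nonneg (w : Fin d → ℤ) (p : ℝ) : 0 ≤ (N w ^ p)⁻¹ :=
  inv_nonneg.mpr (N_rpow_pos w p).le

lemma coord_le_latNorm (w : Fin d → ℤ) (i : Fin d) : |(w i : ℝ)| ≤ latNorm w := by
  rw [← Real.sqrt_sq_eq_abs]
  apply Real.sqrt_le_sqrt
  exact Finset.single_le_sum (fun j _ => sq_nonneg ((w j : ℝ))) (Finset.mem_univ i)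

/-- the basic ENNReal-valued weight. -/
noncomputable def V (w : Fin d → ℤ) (p : ℝ) : ℝ≥0∞ := ENNReal.ofReal ((N w ^ p)⁻¹)

lemma V_mul (w : Fin d → ℤ) (p q : ℝ) : V w p * V w q = V w (p + q) := by
  unfold V
  rw [← ENNReal.ofReal_mul (Vr_nonneg w p), ← mul_inv, ← Real.rpow_add (N_pos w)]

noncomputable def Sig (d : ℕ) (p : ℝ) : ℝ≥0∞ := ∑' w : Fin d → ℤ, V w p

/-- tsum over pi-type of a product equals power of the 1D tsum. -/
lemma tsum_pi_prod (G : ℤ → ℝ≥0∞) : ∀ n : ℕ,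
    ∑' w : Fin n → ℤ, ∏ i, G (w i) = (∑' k : ℤ, G k) ^ n := by
  intro n
  induction n with
  | zero =>
      rw [pow_zero]
      rw [tsum_eq_single (default : Fin 0 → ℤ) (fun b hb => absurd (Subsingleton.elim b default) hb)]
      simp
  | succ n ih =>
      rw [← (Fin.consEquiv (fun _ : Fin (n+1) => ℤ)).tsum_eq]
      have hcons : ∀ p : ℤ × (Fin n → ℤ),
          (∏ i, G ((Fin.consEquiv (fun _ : Fin (n+1) => ℤ)) p i))
            = G p.1 * ∏ i : Fin n, G (p.2 i) := by
        intro p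
        rw [Fin.prod_univ_succ]
        simp [Fin.consEquiv]
      calc ∑' p : ℤ × (Fin n → ℤ), ∏ i, G ((Fin.consEquiv (fun _ : Fin (n+1) => ℤ)) p i)
          = ∑' p : ℤ × (Fin n → ℤ), G p.1 * ∏ i : Fin n, G (p.2 i) := tsum_congr hcons
        _ = ∑' k : ℤ, ∑' w : Fin n → ℤ, G k * ∏ i : Fin n, G (w i) := ENNReal.tsum_prod'
        _ = ∑' k : ℤ, G k * ∑' w : Fin n → ℤ, ∏ i : Fin n, G (w i) := by
            exact tsum_congr fun k => ENNReal.tsum_mul_left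
        _ = (∑' k : ℤ, G k) * (∑' w : Fin n → ℤ, ∏ i : Fin n, G (w i)) := ENNReal.tsum_mul_right
        _ = (∑' k : ℤ, G k) ^ (n + 1) := by rw [ih, pow_succ]; ring

lemma one_dim_summable {s : ℝ} (hs : 1 < s) :
    Summable (fun k : ℤ => ((((|k| : ℤ) : ℝ) + 1) ^ s)⁻¹) := by
  have hnat : Summable (fun n : ℕ => (((n : ℝ) + 1) ^ s)⁻¹) := by
    have h0 := Real.summable_nat_rpow_inv.mpr hs
    have h1 := (summable_nat_add_iff 1).mpr h0
    refine h1.congr fun n => ?_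
    push_cast
    ring_nf
  apply Summable.of_nat_of_neg_add_one
  · refine hnat.congr fun n => ?_
    norm_num
  · refine ((summable_nat_add_iff 1).mpr hnat).congr fun n => ?_
    have h : |(-((n:ℤ)+1))| = (n:ℤ)+1 := by
      rw [abs_neg, abs_of_nonneg (by positivity)]
    rw [Int.neg_add] at h ⊢
    rw [h]
    push_cast
    ring_nf

lemma ofReal_prod {ι : Type*} (s : Finset ι) (g : ι → ℝ) (hg : ∀ i ∈ s, 0 ≤ g i) :
    ENNReal.ofReal (∏ i ∈ s, g i) = ∏ i ∈ s, ENNReal.ofReal (g i) := by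
  induction s using Finset.cons_induction with
  | empty => simp
  | cons a s ha ih =>
      rw [Finset.prod_cons, Finset.prod_cons,
        ENNReal.ofReal_mul (hg a (Finset.mem_cons_self a s)),
        ih (fun i hi => hg i (Finset.mem_cons_of_mem hi))]

lemma Sig_ne_top {p : ℝ} (hd : 0 < d) (hp : (d : ℝ) < p) : Sig d p ≠ ∞ := by
  have hdp : (1 : ℝ) < p / d := (one_lt_div (by exact_mod_cast hd)).mpr hp
  have hp0 : 0 ≤ p := le_trans (by positivity) hp.le
  have hpd0 : 0 ≤ p / d := by positivity
  have key : ∀ w : Fin d → ℤ, V w p ≤ ∏ i, ENNReal.ofReal (((((|w i| : ℤ) : ℝ) + 1) ^ (p / d))⁻¹) := by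
    intro w
    have hb : ∀ i : Fin d, (((|w i| : ℤ) : ℝ) + 1) ≤ N w := by
      intro i
      have := coord_le_latNorm w i
      unfold N
      push_cast
      linarith
    have hprod : ∏ i, (((|w i| : ℤ) : ℝ) + 1) ^ (p / d) ≤ N w ^ p := by
      calc ∏ i, (((|w i| : ℤ) : ℝ) + 1) ^ (p / d)
          ≤ ∏ _i : Fin d, N w ^ (p / d) := by
            refine Finset.prod_le_prod (fun i _ => by positivity) (fun i _ => ?_)
            exact Real.rpow_le_rpow (by positivity) (hb i) hpd0
        _ = (N w ^ (p / d)) ^ (d : ℕ) := by rw [Finset.prod_const, Finset.card_univ, Fintype.card_fin]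
        _ = N w ^ (p / d * d) := by
            rw [← Real.rpow_natCast (N w ^ (p / d)) d, ← Real.rpow_mul (N_pos w).le]
        _ = N w ^ p := by rw [div_mul_cancel₀ _ (by exact_mod_cast hd.ne' : (d : ℝ) ≠ 0)]
    calc V w p ≤ ENNReal.ofReal ((∏ i, (((|w i| : ℤ) : ℝ) + 1) ^ (p / d))⁻¹) := by
          apply ENNReal.ofReal_le_ofReal
          apply inv_anti₀ (by positivity) hprod
      _ = ∏ i, ENNReal.ofReal (((((|w i| : ℤ) : ℝ) + 1) ^ (p / d))⁻¹) := by
          rw [← Finset.prod_inv_distrib, ofReal_prod]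
          intro i _
          positivity
  have hbound := ENNReal.tsum_le_tsum key
  rw [tsum_pi_prod (fun k : ℤ => ENNReal.ofReal (((((|k| : ℤ) : ℝ) + 1) ^ (p / d))⁻¹)) d] at hbound
  have h1 : (∑' k : ℤ, ENNReal.ofReal (((((|k| : ℤ) : ℝ) + 1) ^ (p / d))⁻¹)) ≠ ∞ := by
    rw [← ENNReal.ofReal_tsum_of_nonneg (fun k => by positivity) (one_dim_summable hdp)]
    exact ENNReal.ofReal_ne_top
  exact ne_top_of_le_ne_top (ENNReal.pow_ne_top h1) hbound

lemma split_real {X Y : ℝ} (hX : 1 ≤ X) (hY : 1 ≤ Y) {p q γ : ℝ} (hγ : 0 ≤ γ)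
    (hp : γ ≤ p) (hq : γ ≤ q) :
    (X ^ p)⁻¹ * (Y ^ q)⁻¹ ≤ (X ^ γ)⁻¹ * (Y ^ (p + q - γ))⁻¹ + (X ^ (p + q - γ))⁻¹ * (Y ^ γ)⁻¹ := by
  have hX0 : (0:ℝ) < X := lt_of_lt_of_le one_pos hX
  have hY0 : (0:ℝ) < Y := lt_of_lt_of_le one_pos hY
  rcases le_total X Y with h | h
  · have key : (X ^ p)⁻¹ * (Y ^ q)⁻¹ ≤ (X ^ (p + q - γ))⁻¹ * (Y ^ γ)⁻¹ := by
      rw [← mul_inv, ← mul_inv]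
      apply inv_anti₀ (by positivity)
      calc X ^ (p + q - γ) * Y ^ γ = X ^ p * X ^ (q - γ) * Y ^ γ := by
            rw [← Real.rpow_add hX0]; ring_nf
        _ ≤ X ^ p * Y ^ (q - γ) * Y ^ γ := by
            gcongr
        _ = X ^ p * Y ^ q := by rw [mul_assoc, ← Real.rpow_add hY0]; ring_nf
    exact key.trans (le_add_of_nonneg_left (by positivity))
  · have key : (X ^ p)⁻¹ * (Y ^ q)⁻¹ ≤ (X ^ γ)⁻¹ * (Y ^ (p + q - γ))⁻¹ := by
      rw [← mul_inv, ← mul_inv]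
      apply inv_anti₀ (by positivity)
      calc X ^ γ * Y ^ (p + q - γ) = X ^ γ * (Y ^ (p - γ) * Y ^ q) := by
            rw [← Real.rpow_add hY0]; ring_nf
        _ ≤ X ^ γ * (X ^ (p - γ) * Y ^ q) := by
            gcongr
        _ = X ^ p * Y ^ q := by rw [← mul_assoc, ← Real.rpow_add hX0]; ring_nf
    exact key.trans (le_add_of_nonneg_right (by positivity))

lemma V_zero (w : Fin d → ℤ) : V w 0 = 1 := by
  unfold V
  rw [Real.rpow_zero, inv_one, ENNReal.ofReal_one]

lemma V_split (w v : Fin d → ℤ) {p q γ : ℝ} (hγ : 0 ≤ γ) (hp : γ ≤ p) (hq : γ ≤ q) :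
    V w p * V v q ≤ V w γ * V v (p + q - γ) + V w (p + q - γ) * V v γ := by
  unfold V
  rw [← ENNReal.ofReal_mul (Vr_nonneg w p), ← ENNReal.ofReal_mul (Vr_nonneg w γ),
    ← ENNReal.ofReal_mul (Vr_nonneg w (p + q - γ)),
    ← ENNReal.ofReal_add (mul_nonneg (Vr_nonneg w γ) (Vr_nonneg v (p + q - γ)))
      (mul_nonneg (Vr_nonneg w (p + q - γ)) (Vr_nonneg v γ))]
  exact ENNReal.ofReal_le_ofReal (split_real (one_le_N w) (one_le_N v) hγ hp hq)

lemma L1 (x z : Fin d → ℤ) {A : ℝ} (hA : 0 ≤ A) :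
    V z A * V (z - x) A ≤ ENNReal.ofReal (2 ^ A) * (V x A * (V z A + V (z - x) A)) := by
  unfold V
  rw [← ENNReal.ofReal_mul (Vr_nonneg z A),
    ← ENNReal.ofReal_add (Vr_nonneg z A) (Vr_nonneg (z - x) A),
    ← ENNReal.ofReal_mul (Vr_nonneg x A),
    ← ENNReal.ofReal_mul (by positivity : (0:ℝ) ≤ 2 ^ A)]
  apply ENNReal.ofReal_le_ofReal
  have hsum : N x ≤ N z + N (z - x) := by
    have := latNorm_triangle x z
    unfold N
    linarith
  have main : ∀ Y : ℝ, 1 ≤ Y → N x ≤ 2 * Y → (Y ^ A)⁻¹ ≤ 2 ^ A * (N x ^ A)⁻¹ := by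
    intro Y hY hNY
    have hY0 : (0:ℝ) < Y := lt_of_lt_of_le one_pos hY
    have h1 : N x ^ A ≤ 2 ^ A * Y ^ A := by
      calc N x ^ A ≤ (2 * Y) ^ A := Real.rpow_le_rpow (N_pos x).le hNY hA
        _ = 2 ^ A * Y ^ A := Real.mul_rpow (by norm_num) hY0.le
    have h2 : (2 ^ A * Y ^ A)⁻¹ ≤ (N x ^ A)⁻¹ := inv_anti₀ (N_rpow_pos x A) h1
    calc (Y ^ A)⁻¹ = 2 ^ A * (2 ^ A * Y ^ A)⁻¹ := by
          rw [mul_inv, ← mul_assoc, mul_inv_cancel₀ (by positivity : (2:ℝ) ^ A ≠ 0), one_mul]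
      _ ≤ 2 ^ A * (N x ^ A)⁻¹ := by gcongr
  have ha := Vr_nonneg z A
  have hb := Vr_nonneg (z - x) A
  have hc := Vr_nonneg x A
  rcases le_total (N z) (N (z - x)) with h | h
  · have hbig : N x ≤ 2 * N (z - x) := by linarith
    have h3 := main (N (z - x)) (one_le_N _) hbig
    calc (N z ^ A)⁻¹ * (N (z - x) ^ A)⁻¹
        ≤ (N z ^ A)⁻¹ * (2 ^ A * (N x ^ A)⁻¹) := by gcongr
      _ = 2 ^ A * ((N x ^ A)⁻¹ * (N z ^ A)⁻¹) := by ring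
      _ ≤ 2 ^ A * ((N x ^ A)⁻¹ * ((N z ^ A)⁻¹ + (N (z - x) ^ A)⁻¹)) := by
          gcongr
          linarith
  · have hbig : N x ≤ 2 * N z := by linarith
    have h3 := main (N z) (one_le_N _) hbig
    calc (N z ^ A)⁻¹ * (N (z - x) ^ A)⁻¹
        ≤ (2 ^ A * (N x ^ A)⁻¹) * (N (z - x) ^ A)⁻¹ := by gcongr
      _ = 2 ^ A * ((N x ^ A)⁻¹ * (N (z - x) ^ A)⁻¹) := by ring
      _ ≤ 2 ^ A * ((N x ^ A)⁻¹ * ((N z ^ A)⁻¹ + (N (z - x) ^ A)⁻¹)) := by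
          gcongr
          linarith

lemma tsum_V_sub (c : Fin d → ℤ) (p : ℝ) :
    ∑' z : Fin d → ℤ, V (z - c) p = Sig d p :=
  (Equiv.subRight c).tsum_eq (fun w => V w p)

lemma tsum_V_sub_left (z : Fin d → ℤ) (p : ℝ) :
    ∑' z' : Fin d → ℤ, V (z - z') p = Sig d p :=
  (Equiv.subLeft z).tsum_eq (fun w => V w p)

lemma coreD (hd : 3 ≤ d) (c c' : Fin d → ℤ) :
    ∑' q : (Fin d → ℤ) × (Fin d → ℤ),
      V (q.1 - c) ((d:ℝ) - 1) * V (q.2 - c') ((d:ℝ) - 1) * V (q.1 - q.2) (d:ℝ)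
    ≤ 4 * (Sig d (((d:ℝ) - 1) + ((d:ℝ) - 1) - 1/2) * Sig d (1/2 + (d:ℝ) - 0)) := by
  have hd3 : (3:ℝ) ≤ (d:ℝ) := by exact_mod_cast hd
  set A : ℝ := (d:ℝ) - 1 with hA
  set be : ℝ := A + A - 1/2 with hbe
  set ap : ℝ := 1/2 + (d:ℝ) - 0 with hap
  have hhalfA : (1/2 : ℝ) ≤ A := by rw [hA]; linarith
  have hdd0 : (0:ℝ) ≤ (d:ℝ) := by positivity
  have pw : ∀ z z' : Fin d → ℤ,
      V (z - c) A * V (z' - c') A * V (z - z') (d:ℝ) ≤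
        (V (z' - c') be * V (z - z') ap + V (z' - c') be * V (z - c) ap)
        + (V (z - c) be * V (z - z') ap + V (z - c) be * V (z' - c') ap) := by
    intro z z'
    have h1 := V_split (z - c) (z' - c') (γ := 1/2) (by norm_num) hhalfA hhalfA
    have h2 := V_split (z - c) (z - z') (p := 1/2) (q := (d:ℝ)) (γ := 0) le_rfl (by norm_num) hdd0
    have h3 := V_split (z' - c') (z - z') (p := 1/2) (q := (d:ℝ)) (γ := 0) le_rfl (by norm_num) hdd0
    rw [V_zero, V_zero, one_mul, mul_one] at h2 h3
    have e2 : (1/2 + (d:ℝ) - 0) = ap := rfl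
    calc V (z - c) A * V (z' - c') A * V (z - z') (d:ℝ)
        ≤ (V (z - c) (1/2) * V (z' - c') (A + A - 1/2)
            + V (z - c) (A + A - 1/2) * V (z' - c') (1/2)) * V (z - z') (d:ℝ) :=
          mul_le_mul_left h1 _
      _ = V (z' - c') be * (V (z - c) (1/2) * V (z - z') (d:ℝ))
            + V (z - c) be * (V (z' - c') (1/2) * V (z - z') (d:ℝ)) := by
          rw [hbe]; ring
      _ ≤ V (z' - c') be * (V (z - z') ap + V (z - c) ap)
            + V (z - c) be * (V (z - z') ap + V (z' - c') ap) := by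
          exact add_le_add (mul_le_mul_right h2 _) (mul_le_mul_right h3 _)
      _ = (V (z' - c') be * V (z - z') ap + V (z' - c') be * V (z - c) ap)
            + (V (z - c) be * V (z - z') ap + V (z - c) be * V (z' - c') ap) := by
          ring
  calc ∑' q : (Fin d → ℤ) × (Fin d → ℤ),
        V (q.1 - c) ((d:ℝ) - 1) * V (q.2 - c') ((d:ℝ) - 1) * V (q.1 - q.2) (d:ℝ)
      ≤ ∑' q : (Fin d → ℤ) × (Fin d → ℤ),
          ((V (q.2 - c') be * V (q.1 - q.2) ap + V (q.2 - c') be * V (q.1 - c) ap)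
            + (V (q.1 - c) be * V (q.1 - q.2) ap + V (q.1 - c) be * V (q.2 - c') ap)) :=
        ENNReal.tsum_le_tsum (fun q => pw q.1 q.2)
    _ = ((∑' q : (Fin d → ℤ) × (Fin d → ℤ), V (q.2 - c') be * V (q.1 - q.2) ap)
          + (∑' q : (Fin d → ℤ) × (Fin d → ℤ), V (q.2 - c') be * V (q.1 - c) ap))
          + ((∑' q : (Fin d → ℤ) × (Fin d → ℤ), V (q.1 - c) be * V (q.1 - q.2) ap)
          + (∑' q : (Fin d → ℤ) × (Fin d → ℤ), V (q.1 - c) be * V (q.2 - c') ap)) := by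
        rw [ENNReal.tsum_add, ENNReal.tsum_add, ENNReal.tsum_add]
    _ = 4 * (Sig d be * Sig d ap) := by
        have Sa : (∑' q : (Fin d → ℤ) × (Fin d → ℤ), V (q.2 - c') be * V (q.1 - q.2) ap)
            = Sig d be * Sig d ap := by
          rw [ENNReal.tsum_prod']
          show (∑' z : Fin d → ℤ, ∑' z' : Fin d → ℤ, V (z' - c') be * V (z - z') ap) = _
          rw [ENNReal.tsum_comm]
          calc ∑' z' : Fin d → ℤ, ∑' z : Fin d → ℤ, V (z' - c') be * V (z - z') ap
              = ∑' z' : Fin d → ℤ, V (z' - c') be * Sig d ap := by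
                refine tsum_congr fun z' => ?_
                rw [ENNReal.tsum_mul_left, tsum_V_sub z' ap]
            _ = Sig d be * Sig d ap := by
                rw [ENNReal.tsum_mul_right, tsum_V_sub c' be]
        have Sb : (∑' q : (Fin d → ℤ) × (Fin d → ℤ), V (q.2 - c') be * V (q.1 - c) ap)
            = Sig d be * Sig d ap := by
          rw [ENNReal.tsum_prod']
          show (∑' z : Fin d → ℤ, ∑' z' : Fin d → ℤ, V (z' - c') be * V (z - c) ap) = _
          calc ∑' z : Fin d → ℤ, ∑' z' : Fin d → ℤ, V (z' - c') be * V (z - c) ap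
              = ∑' z : Fin d → ℤ, Sig d be * V (z - c) ap := by
                refine tsum_congr fun z => ?_
                rw [ENNReal.tsum_mul_right, tsum_V_sub c' be]
            _ = Sig d be * Sig d ap := by
                rw [ENNReal.tsum_mul_left, tsum_V_sub c ap]
        have Sc : (∑' q : (Fin d → ℤ) × (Fin d → ℤ), V (q.1 - c) be * V (q.1 - q.2) ap)
            = Sig d be * Sig d ap := by
          rw [ENNReal.tsum_prod']
          show (∑' z : Fin d → ℤ, ∑' z' : Fin d → ℤ, V (z - c) be * V (z - z') ap) = _
          calc ∑' z : Fin d → ℤ, ∑' z' : Fin d → ℤ, V (z - c) be * V (z - z') ap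
              = ∑' z : Fin d → ℤ, V (z - c) be * Sig d ap := by
                refine tsum_congr fun z => ?_
                rw [ENNReal.tsum_mul_left, tsum_V_sub_left z ap]
            _ = Sig d be * Sig d ap := by
                rw [ENNReal.tsum_mul_right, tsum_V_sub c be]
        have Sd : (∑' q : (Fin d → ℤ) × (Fin d → ℤ), V (q.1 - c) be * V (q.2 - c') ap)
            = Sig d be * Sig d ap := by
          rw [ENNReal.tsum_prod']
          show (∑' z : Fin d → ℤ, ∑' z' : Fin d → ℤ, V (z - c) be * V (z' - c') ap) = _
          calc ∑' z : Fin d → ℤ, ∑' z' : Fin d → ℤ, V (z - c) be * V (z' - c') ap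
              = ∑' z : Fin d → ℤ, V (z - c) be * Sig d ap := by
                refine tsum_congr fun z => ?_
                rw [ENNReal.tsum_mul_left, tsum_V_sub c' ap]
            _ = Sig d be * Sig d ap := by
                rw [ENNReal.tsum_mul_right, tsum_V_sub c be]
        rw [Sa, Sb, Sc, Sd]
        ring


lemma base_pos (w : Fin d → ℤ) : 0 < latNorm w + 1 := N_pos w

lemma ofReal_single (w : Fin d → ℤ) (k : ℕ) :
    ENNReal.ofReal (1 / (latNorm w + 1) ^ k) = V w (k:ℝ) := by
  unfold V N
  rw [one_div, ← Real.rpow_natCast (latNorm w + 1) k]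

lemma ofReal_pair (x w : Fin d → ℤ) (k : ℕ) :
    ENNReal.ofReal (1 / ((latNorm w + 1) ^ k * (latNorm (w - x) + 1) ^ k))
      = V w (k:ℝ) * V (w - x) (k:ℝ) := by
  rw [one_div, mul_inv,
    ENNReal.ofReal_mul (inv_nonneg.mpr (pow_pos (base_pos w) k).le)]
  unfold V N
  rw [← Real.rpow_natCast (latNorm w + 1) k, ← Real.rpow_natCast (latNorm (w - x) + 1) k]

theorem lattice_double_sum_aux (d : ℕ) (hd : 3 ≤ d) :
    ∃ C : ℝ, 0 < C ∧ ∀ x : Fin d → ℤ,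
      (∑' p : (Fin d → ℤ) × (Fin d → ℤ),
          1 / ((latNorm p.1 + 1) ^ (d - 1) * (latNorm (p.1 - x) + 1) ^ (d - 1)) *
            (1 / ((latNorm p.2 + 1) ^ (d - 1) * (latNorm (p.2 - x) + 1) ^ (d - 1))) *
            (1 / (latNorm (p.1 - p.2) + 1) ^ d))
        ≤ C / (latNorm x + 1) ^ (2 * d - 2) := by
  classical
  have hd0 : 0 < d := by omega
  have hd3 : (3:ℝ) ≤ (d:ℝ) := by exact_mod_cast hd
  set Ar : ℝ := (d:ℝ) - 1 with hAr
  have hAr0 : 0 ≤ Ar := by rw [hAr]; linarith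
  set be : ℝ := ((d:ℝ) - 1) + ((d:ℝ) - 1) - 1/2 with hbe
  set ap : ℝ := 1/2 + (d:ℝ) - 0 with hap
  have hfbe : Sig d be ≠ ∞ := Sig_ne_top hd0 (by rw [hbe]; linarith)
  have hfap : Sig d ap ≠ ∞ := Sig_ne_top hd0 (by rw [hap]; linarith)
  set M : ℝ≥0∞ := ENNReal.ofReal (2 ^ Ar) * ENNReal.ofReal (2 ^ Ar)
      * (16 * (Sig d be * Sig d ap)) with hM
  have hMfin : M ≠ ∞ := by
    rw [hM]
    apply ENNReal.mul_ne_top (ENNReal.mul_ne_top ENNReal.ofReal_ne_top ENNReal.ofReal_ne_top)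
    apply ENNReal.mul_ne_top (by norm_num)
    exact ENNReal.mul_ne_top hfbe hfap
  refine ⟨M.toReal + 1, by positivity, fun x => ?_⟩
  have hbase : ∀ w : Fin d → ℤ, (0:ℝ) < latNorm w + 1 := base_pos
  have hRHS0 : 0 ≤ (M.toReal + 1) / (latNorm x + 1) ^ (2 * d - 2) := by
    apply div_nonneg (by positivity) (pow_nonneg (hbase x).le _)
  by_cases hs : Summable (fun p : (Fin d → ℤ) × (Fin d → ℤ) =>
      1 / ((latNorm p.1 + 1) ^ (d - 1) * (latNorm (p.1 - x) + 1) ^ (d - 1)) *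
        (1 / ((latNorm p.2 + 1) ^ (d - 1) * (latNorm (p.2 - x) + 1) ^ (d - 1))) *
        (1 / (latNorm (p.1 - p.2) + 1) ^ d))
  swap
  · rw [tsum_eq_zero_of_not_summable hs]
    exact hRHS0
  have hnn : ∀ p : (Fin d → ℤ) × (Fin d → ℤ),
      (0:ℝ) ≤ 1 / ((latNorm p.1 + 1) ^ (d - 1) * (latNorm (p.1 - x) + 1) ^ (d - 1)) *
        (1 / ((latNorm p.2 + 1) ^ (d - 1) * (latNorm (p.2 - x) + 1) ^ (d - 1))) *
        (1 / (latNorm (p.1 - p.2) + 1) ^ d) := by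
    intro p
    have h1 : ∀ w v : Fin d → ℤ, (0:ℝ) < (latNorm w + 1) ^ (d-1) * (latNorm v + 1) ^ (d-1) :=
      fun w v => mul_pos (pow_pos (hbase w) _) (pow_pos (hbase v) _)
    have h2 : (0:ℝ) < (latNorm (p.1 - p.2) + 1) ^ d := pow_pos (hbase _) _
    exact mul_nonneg (mul_nonneg (one_div_nonneg.mpr (h1 p.1 (p.1 - x)).le)
      (one_div_nonneg.mpr (h1 p.2 (p.2 - x)).le)) (one_div_nonneg.mpr h2.le)
  refine (ENNReal.ofReal_le_ofReal_iff hRHS0).mp ?_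
  rw [ENNReal.ofReal_tsum_of_nonneg hnn hs]
  have hcast : ((d - 1 : ℕ) : ℝ) = Ar := by
    rw [hAr, Nat.cast_sub (by omega : 1 ≤ d), Nat.cast_one]
  have hterm : ∀ p : (Fin d → ℤ) × (Fin d → ℤ),
      ENNReal.ofReal
        (1 / ((latNorm p.1 + 1) ^ (d - 1) * (latNorm (p.1 - x) + 1) ^ (d - 1)) *
          (1 / ((latNorm p.2 + 1) ^ (d - 1) * (latNorm (p.2 - x) + 1) ^ (d - 1))) *
          (1 / (latNorm (p.1 - p.2) + 1) ^ d))
        = (V p.1 Ar * V (p.1 - x) Ar) * (V p.2 Ar * V (p.2 - x) Ar)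
            * V (p.1 - p.2) (d:ℝ) := by
    intro p
    have h1 : ∀ w v : Fin d → ℤ,
        (0:ℝ) ≤ 1 / ((latNorm w + 1) ^ (d-1) * (latNorm v + 1) ^ (d-1)) := fun w v =>
      one_div_nonneg.mpr (mul_pos (pow_pos (hbase w) _) (pow_pos (hbase v) _)).le
    rw [ENNReal.ofReal_mul (mul_nonneg (h1 p.1 (p.1 - x)) (h1 p.2 (p.2 - x))),
      ENNReal.ofReal_mul (h1 p.1 (p.1 - x)), ofReal_pair, ofReal_pair, ofReal_single, hcast]
  have hExpand : (∑' p : (Fin d → ℤ) × (Fin d → ℤ),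
      (V p.1 Ar + V (p.1 - x) Ar) * (V p.2 Ar + V (p.2 - x) Ar) * V (p.1 - p.2) (d:ℝ))
      ≤ 16 * (Sig d be * Sig d ap) := by
    have expand : ∀ p : (Fin d → ℤ) × (Fin d → ℤ),
        (V p.1 Ar + V (p.1 - x) Ar) * (V p.2 Ar + V (p.2 - x) Ar) * V (p.1 - p.2) (d:ℝ)
        = ((V (p.1 - 0) Ar * V (p.2 - 0) Ar * V (p.1 - p.2) (d:ℝ))
          + (V (p.1 - 0) Ar * V (p.2 - x) Ar * V (p.1 - p.2) (d:ℝ)))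
          + ((V (p.1 - x) Ar * V (p.2 - 0) Ar * V (p.1 - p.2) (d:ℝ))
          + (V (p.1 - x) Ar * V (p.2 - x) Ar * V (p.1 - p.2) (d:ℝ))) := by
      intro p
      rw [sub_zero, sub_zero]
      ring
    calc (∑' p : (Fin d → ℤ) × (Fin d → ℤ),
          (V p.1 Ar + V (p.1 - x) Ar) * (V p.2 Ar + V (p.2 - x) Ar) * V (p.1 - p.2) (d:ℝ))
        = ((∑' p : (Fin d → ℤ) × (Fin d → ℤ), V (p.1 - 0) Ar * V (p.2 - 0) Ar * V (p.1 - p.2) (d:ℝ))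
          + (∑' p : (Fin d → ℤ) × (Fin d → ℤ), V (p.1 - 0) Ar * V (p.2 - x) Ar * V (p.1 - p.2) (d:ℝ)))
          + ((∑' p : (Fin d → ℤ) × (Fin d → ℤ), V (p.1 - x) Ar * V (p.2 - 0) Ar * V (p.1 - p.2) (d:ℝ))
          + (∑' p : (Fin d → ℤ) × (Fin d → ℤ), V (p.1 - x) Ar * V (p.2 - x) Ar * V (p.1 - p.2) (d:ℝ))) := by
          rw [tsum_congr expand, ENNReal.tsum_add, ENNReal.tsum_add, ENNReal.tsum_add]
      _ ≤ (4 * (Sig d be * Sig d ap) + 4 * (Sig d be * Sig d ap))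
          + (4 * (Sig d be * Sig d ap) + 4 * (Sig d be * Sig d ap)) :=
          add_le_add (add_le_add (coreD hd 0 0) (coreD hd 0 x))
            (add_le_add (coreD hd x 0) (coreD hd x x))
      _ = 16 * (Sig d be * Sig d ap) := by ring
  have hMle : M ≤ ENNReal.ofReal (M.toReal + 1) := by
    conv_lhs => rw [← ENNReal.ofReal_toReal hMfin]
    exact ENNReal.ofReal_le_ofReal (by linarith)
  calc (∑' p : (Fin d → ℤ) × (Fin d → ℤ), ENNReal.ofReal
        (1 / ((latNorm p.1 + 1) ^ (d - 1) * (latNorm (p.1 - x) + 1) ^ (d - 1)) *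
          (1 / ((latNorm p.2 + 1) ^ (d - 1) * (latNorm (p.2 - x) + 1) ^ (d - 1))) *
          (1 / (latNorm (p.1 - p.2) + 1) ^ d)))
      = ∑' p : (Fin d → ℤ) × (Fin d → ℤ),
          (V p.1 Ar * V (p.1 - x) Ar) * (V p.2 Ar * V (p.2 - x) Ar) * V (p.1 - p.2) (d:ℝ) :=
        tsum_congr hterm
    _ ≤ ∑' p : (Fin d → ℤ) × (Fin d → ℤ),
          (ENNReal.ofReal (2 ^ Ar) * (V x Ar * (V p.1 Ar + V (p.1 - x) Ar)))
          * (ENNReal.ofReal (2 ^ Ar) * (V x Ar * (V p.2 Ar + V (p.2 - x) Ar)))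
          * V (p.1 - p.2) (d:ℝ) := by
        refine ENNReal.tsum_le_tsum fun p => ?_
        exact mul_le_mul' (mul_le_mul' (L1 x p.1 hAr0) (L1 x p.2 hAr0)) le_rfl
    _ = (ENNReal.ofReal (2 ^ Ar) * ENNReal.ofReal (2 ^ Ar) * (V x Ar * V x Ar))
          * ∑' p : (Fin d → ℤ) × (Fin d → ℤ),
            (V p.1 Ar + V (p.1 - x) Ar) * (V p.2 Ar + V (p.2 - x) Ar) * V (p.1 - p.2) (d:ℝ) := by
        rw [← ENNReal.tsum_mul_left]
        exact tsum_congr fun p => by ring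
    _ ≤ (ENNReal.ofReal (2 ^ Ar) * ENNReal.ofReal (2 ^ Ar) * (V x Ar * V x Ar))
          * (16 * (Sig d be * Sig d ap)) := mul_le_mul_right hExpand _
    _ = V x (Ar + Ar) * M := by rw [← V_mul, hM]; ring
    _ ≤ V x (Ar + Ar) * ENNReal.ofReal (M.toReal + 1) := mul_le_mul_right hMle _
    _ = ENNReal.ofReal ((M.toReal + 1) / (latNorm x + 1) ^ (2 * d - 2)) := by
        have hc : ((2 * d - 2 : ℕ) : ℝ) = Ar + Ar := by
          rw [Nat.cast_sub (by omega : 2 ≤ 2 * d), hAr]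
          push_cast
          ring
        have hv : V x (Ar + Ar) = ENNReal.ofReal (((latNorm x + 1) ^ (2 * d - 2 : ℕ))⁻¹) := by
          unfold LatAux.V LatAux.N
          rw [← hc, Real.rpow_natCast]
        rw [hv, ← ENNReal.ofReal_mul (inv_nonneg.mpr (pow_pos (hbase x) _).le)]
        congr 1
        rw [div_eq_mul_inv, mul_comm]

end LatAux

/-- For `d ≥ 3`, there is `C = C(d) < ∞` such that for all `x ∈ ℤ^d`,
`∑_{z,z'} 1/(|z|₊^{d−1}|z−x|₊^{d−1}) · 1/(|z'|₊^{d−1}|z'−x|₊^{d−1}) · 1/|z−z'|₊^d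
  ≤ C/|x|₊^{2d−2}`. -/
theorem lattice_double_sum (d : ℕ) (hd : 3 ≤ d) :
    ∃ C : ℝ, 0 < C ∧ ∀ x : Fin d → ℤ,
      (∑' p : (Fin d → ℤ) × (Fin d → ℤ),
          1 / ((latNorm p.1 + 1) ^ (d - 1) * (latNorm (p.1 - x) + 1) ^ (d - 1)) *
            (1 / ((latNorm p.2 + 1) ^ (d - 1) * (latNorm (p.2 - x) + 1) ^ (d - 1))) *
            (1 / (latNorm (p.1 - p.2) + 1) ^ d))
        ≤ C / (latNorm x + 1) ^ (2 * d - 2) :=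
  LatAux.lattice_double_sum_aux d hd
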